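/- (Correctness of MI-FEIP decryption.) Let G be a commutative group, g an element of G, n a natural number, and η : Fin n → ℕ. Let a : Fin 2 → ℤ; for each party i let W_i be an η_i × 2 integer matrix, u_i, x_i, y_i : Fin η_i → ℤ, and r_i : ℤ. Define the ciphertext components t_{i,ℓ} = g^{a_ℓ · r_i} for ℓ in Fin 2, and c_{i,j} = g^{x_{i,j}} · g^{u_{i,j}} · g^{(∑_ℓ W_{i,j,ℓ} · a_ℓ) · r_i}; define the functional key components d_{i,ℓ} = ∑_j y_{i,j} · W_{i,j,ℓ} and z = ∑_i ∑_j y_{i,j} · u_{i,j}. Then (∏_i (∏_j c_{i,j}^{y_{i,j}}) · (∏_ℓ t_{i,ℓ}^{d_{i,ℓ}})^{−1}) · g^{−z} = g^{∑_i ∑_j y_{i,j} · x_{i,j}}, i.e., the decryption expression of the multi-input functional encryption scheme equals g raised to the multi-input inner product f_MIIP((x_1, ..., x_n), y). -/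

import Mathlib

/-!
Every factor is a power of `g`, so the claim is an identity between integer exponents. Party `i`'s
mask contributes `yᵢᵀ (Wᵢ a) rᵢ`, which equals `(yᵢᵀ Wᵢ) a rᵢ = ⟨dᵢ, a⟩ rᵢ` and is removed by the
`tᵢ`-term; what remains is `⟨yᵢ, xᵢ⟩ + ⟨yᵢ, uᵢ⟩`, and `g^{-z}` removes the `uᵢ`-parts.
-/

open Finset

theorem Finset.prod_zpow_eq_zpow_sum {G ι : Type*} [CommGroup G] (s : Finset ι) (f : ι → ℤ)
    (g : G) : ∏ i ∈ s, g ^ f i = g ^ ∑ i ∈ s, f i :=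
  (map_prod (zpowersHom G g) (fun i => .ofAdd (f i)) s).symm

theorem sum_mulVec_mul_eq_sum_mul_vecMul {R ι κ : Type*} [CommRing R] [Fintype ι] [Fintype κ]
    (a : κ → R) (W : ι → κ → R) (y : ι → R) (r : R) :
    ∑ j, (∑ ℓ, W j ℓ * a ℓ) * r * y j = ∑ ℓ, a ℓ * r * ∑ j, y j * W j ℓ := by
  simp only [mul_sum, sum_mul]
  rw [sum_comm]
  exact sum_congr rfl fun _ _ => sum_congr rfl fun _ _ => by ring

theorem party_decrypt_eq {G ι κ : Type*} [CommGroup G] [Fintype ι] [Fintype κ] (g : G)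
    (a : κ → ℤ) (W : ι → κ → ℤ) (u x y : ι → ℤ) (r : ℤ) :
    (∏ j, (g ^ x j * g ^ u j * g ^ ((∑ ℓ, W j ℓ * a ℓ) * r)) ^ y j) *
        (∏ ℓ, (g ^ (a ℓ * r)) ^ (∑ j, y j * W j ℓ))⁻¹ =
      g ^ (∑ j, y j * x j + ∑ j, y j * u j) := by
  simp only [← zpow_add, ← zpow_mul, prod_zpow_eq_zpow_sum, ← zpow_neg]
  congr 1
  rw [← sum_mulVec_mul_eq_sum_mul_vecMul]
  simp only [add_mul, sum_add_distrib, mul_comm (y _)]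
  ring

/-- Correctness of MI-FEIP decryption: with ciphertext components
`t_{i,ℓ} = g^{a_ℓ·r_i}`, `c_{i,j} = g^{x_{i,j}}·g^{u_{i,j}}·g^{(∑_ℓ W_{i,j,ℓ}·a_ℓ)·r_i}`
and functional key `d_{i,ℓ} = ∑_j y_{i,j}·W_{i,j,ℓ}`, `z = ∑_i ∑_j y_{i,j}·u_{i,j}`,
the decryption expression equals `g` raised to the multi-input inner product. -/
theorem mi_feip_decrypt_correct
    {G : Type*} [CommGroup G] (g : G) (n : ℕ) (η : Fin n → ℕ)
    (a : Fin 2 → ℤ)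
    (W : (i : Fin n) → Fin (η i) → Fin 2 → ℤ)
    (u x y : (i : Fin n) → Fin (η i) → ℤ)
    (r : Fin n → ℤ) :
    (∏ i, (∏ j, (g ^ x i j * g ^ u i j *
            g ^ ((∑ ℓ, W i j ℓ * a ℓ) * r i)) ^ y i j) *
          (∏ ℓ, (g ^ (a ℓ * r i)) ^ (∑ j, y i j * W i j ℓ))⁻¹) *
        g ^ (-(∑ i, ∑ j, y i j * u i j)) =
      g ^ (∑ i, ∑ j, y i j * x i j) := by
  simp_rw [party_decrypt_eq]
  rw [prod_zpow_eq_zpow_sum, ← zpow_add, sum_add_distrib]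
  rw [add_neg_cancel_right]
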